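/- For n ≥ 1, let p̂_n denote the probability that the root (the vertex labelled 1) of a random recursive tree Λ_n with n vertices belongs to the layered independent set of Λ_n. Then p̂_1 = 1 and, for all n ≥ 2, p̂_n = (1/(n−1)) Σ_{j=1}^{n−1} (1 − p̂_j) p̂_{n−j}. -/

import Mathlib

open MeasureTheory ProbabilityTheory Filter Asymptotics

/-- `f` is a valid parent function of a recursive tree on vertices `0, 1, …, n-1`
(vertex `i` has label `i+1`): the root `0` is a fixed point and the parent of any
other vertex has a smaller index. -/
def IsRecParent {n : ℕ} (f : Fin n → Fin n) : Prop :=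
  ∀ i : Fin n, ((i : ℕ) = 0 → f i = i) ∧ ((i : ℕ) ≠ 0 → (f i : ℕ) < (i : ℕ))

instance {n : ℕ} : DecidablePred (@IsRecParent n) := fun f =>
  inferInstanceAs (Decidable
    (∀ i : Fin n, ((i : ℕ) = 0 → f i = i) ∧ ((i : ℕ) ≠ 0 → (f i : ℕ) < (i : ℕ))))

/-- Recursive trees on `n` vertices, encoded by their parent functions. The uniform
distribution on this type is exactly the distribution of the random recursive tree. -/
abbrev RecTree (n : ℕ) : Type := {f : Fin n → Fin n // IsRecParent f}

instance {n : ℕ} : Nonempty (RecTree n) :=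
  ⟨⟨fun i => ⟨0, i.pos⟩, fun i =>
    ⟨fun h => by apply Fin.ext; simp [h], fun h => Nat.pos_of_ne_zero h⟩⟩⟩

instance (n : ℕ) : MeasurableSpace (RecTree n) := ⊤

/-- The distribution of the random recursive tree on `n` vertices. -/
noncomputable def recMeasure (n : ℕ) : Measure (RecTree n) :=
  (PMF.uniformOfFintype (RecTree n)).toMeasure

/-- The graph associated to a parent function `p` on the vertex set `V`:
`u` and `v` are adjacent iff one is the parent of the other (fixed points give no loops). -/
def parentGraph {V : Type*} (p : V → V) : SimpleGraph V :=
  SimpleGraph.fromRel fun u v => p u = v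

/-- The leaves of the forest induced on the vertex subset `S`: members of `S` with no
children inside `S`. -/
def leafIn {V : Type*} (p : V → V) (S : Set V) : Set V :=
  {v | v ∈ S ∧ ∀ u ∈ S, u ≠ v → p u ≠ v}

/-- One step of the layer process: remove from `S` all leaves together with their parents. -/
def layerStep {V : Type*} (p : V → V) (S : Set V) : Set V :=
  S \ (leafIn p S ∪ {v | v ∈ S ∧ ∃ u ∈ leafIn p S, u ≠ v ∧ p u = v})

/-- `layerFrom p S₀ ℓ` is `T^[ℓ]` for the forest induced on the vertex set `S₀`. -/
def layerFrom {V : Type*} (p : V → V) (S₀ : Set V) : ℕ → Set V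
  | 0 => S₀
  | ℓ + 1 => layerStep p (layerFrom p S₀ ℓ)

/-- The layered independent set of the forest induced on the vertex set `S₀`:
the union over all `ℓ` of the leaves of `T^[ℓ]`. -/
def layeredIndepSetOn {V : Type*} (p : V → V) (S₀ : Set V) : Set V :=
  ⋃ ℓ : ℕ, leafIn p (layerFrom p S₀ ℓ)

/-- The layered independent set of the tree/forest with parent function `p`. -/
def layeredIndepSet {V : Type*} (p : V → V) : Set V :=
  layeredIndepSetOn p Set.univ

/-- The probability that the root (label 1, i.e. vertex `0`) of a random recursive tree
with `n` vertices belongs to the layered independent set. -/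
noncomputable def rrtRootProb (n : ℕ) : ℝ :=
  ((recMeasure n) {f : RecTree n | ∃ h : 0 < n,
    (⟨0, h⟩ : Fin n) ∈ layeredIndepSet f.val}).toReal


/-!
Cutting the edge between the root and vertex `2` splits a recursive tree into the subtree `A` of
vertex `2` and the rest `Aᶜ`. Both parts are recursive trees on finite linear orders, and
grafting the first below the root of the second inverts the cut, so a tree is the same thing as
a triple `(A, tree on A, tree on Aᶜ)` with `2 ∈ A ∌ 1`. Counts of recursive trees on a finite
linear order only depend on its size, and there are `(m-1)!` of them on `m` vertices.

Peeling leaves together with their parents decides vertices from the leaves upwards: a vertex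
is in the layered independent set iff none of its children is. Hence this set is computed
subtree by subtree, and the root lies in it iff vertex `2` does not lie in that of its subtree
while the root lies in that of the rest. Summing over `|A| = j`, with `C(n-2, j-1)` choices of
`A`, and using `C(n-2, j-1) (j-1)! (n-j-1)! = (n-2)!` gives the recurrence.
-/

open Nat

section LayeredIndepSet

variable {V W : Type*} {p : V → V}

def children (p : V → V) (v : V) : Set V := {u | u ≠ v ∧ p u = v}

theorem children_conj (e : V ≃ W) (p : V → V) (v : V) :
    children (e ∘ p ∘ e.symm) (e v) = e '' children p v := by
  ext u
  obtain ⟨u, rfl⟩ := e.surjective u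
  simp [children]

theorem layerFrom_antitone (p : V → V) (S : Set V) : Antitone (layerFrom p S) :=
  antitone_nat_of_succ_le fun _ => Set.sdiff_subset

variable [PartialOrder V]

theorem lt_of_mem_children (hp : ∀ u, p u ≠ u → p u < u) {u v : V} (hu : u ∈ children p v) :
    v < u :=
  hu.2 ▸ hp u (hu.2 ▸ hu.1.symm)

variable [Finite V]

theorem leafIn_nonempty (hp : ∀ u, p u ≠ u → p u < u) {S : Set V} (hS : S.Nonempty) :
    (leafIn p S).Nonempty := by
  obtain ⟨v, hv⟩ := S.toFinite.exists_maximal hS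
  exact ⟨v, hv.1, fun u hu huv hpu => hv.not_gt hu (lt_of_mem_children hp ⟨huv, hpu⟩)⟩

theorem exists_layerFrom_eq_empty (hp : ∀ u, p u ≠ u → p u < u) (S : Set V) :
    ∃ ℓ, layerFrom p S ℓ = ∅ := by
  obtain ⟨ℓ, hℓ⟩ := WellFoundedLT.antitone_chain_condition (layerFrom_antitone p S)
  refine ⟨ℓ, Set.not_nonempty_iff_eq_empty.1 fun hne => ?_⟩
  obtain ⟨v, hv⟩ := leafIn_nonempty hp hne
  have hv' : v ∈ layerFrom p S (ℓ + 1) := hℓ (ℓ + 1) ℓ.le_succ ▸ hv.1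
  exact hv'.2 (Or.inl hv)

theorem mem_layeredIndepSet_iff (hp : ∀ u, p u ≠ u → p u < u) {v : V} :
    v ∈ layeredIndepSet p ↔ ∀ u ∈ children p v, u ∉ layeredIndepSet p := by
  simp only [layeredIndepSet, layeredIndepSetOn, Set.mem_iUnion]
  constructor
  · rintro ⟨ℓ, hv⟩ u ⟨huv, hpu⟩ ⟨m, hu⟩
    rcases lt_or_ge m ℓ with hmℓ | hℓm
    · have hv' : v ∈ layerFrom p Set.univ (m + 1) := layerFrom_antitone p _ hmℓ hv.1
      exact hv'.2 (Or.inr ⟨hv'.1, u, hu, huv, hpu⟩)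
    · exact hv.2 u (layerFrom_antitone p _ hℓm hu.1) huv hpu
  · intro h
    -- such a vertex would never be peeled off, but the layers run out
    by_contra hv
    have hmem : ∀ ℓ, v ∈ layerFrom p Set.univ ℓ := by
      intro ℓ
      induction ℓ with
      | zero => trivial
      | succ ℓ ih =>
        refine ⟨ih, ?_⟩
        rintro (hleaf | ⟨-, u, hu, huv, hpu⟩)
        · exact hv ⟨ℓ, hleaf⟩
        · exact h u ⟨huv, hpu⟩ ⟨ℓ, hu⟩
    obtain ⟨ℓ, hℓ⟩ := exists_layerFrom_eq_empty hp Set.univ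
    simpa [hℓ] using hmem ℓ

theorem mem_layeredIndepSet_iff_of_children_eq_image [PartialOrder W] [Finite W] {q : W → W}
    (hp : ∀ u, p u ≠ u → p u < u) (hq : ∀ w, q w ≠ w → q w < w) {ι : W → V}
    {S : Set W} (hS : ∀ w ∈ S, children p (ι w) = ι '' children q w)
    (hSq : ∀ w ∈ S, children q w ⊆ S) {w : W} (hw : w ∈ S) :
    ι w ∈ layeredIndepSet p ↔ w ∈ layeredIndepSet q := by
  induction w using WellFoundedGT.induction with
  | _ w ih =>
    rw [mem_layeredIndepSet_iff hp, mem_layeredIndepSet_iff hq, hS w hw, Set.forall_mem_image]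
    exact forall₂_congr fun u hu =>
      not_congr (ih u (lt_of_mem_children hq hu) (hSq w hw hu))

end LayeredIndepSet

section RecTreeOn

variable {V W : Type*}

def IsRecTree [Preorder V] (p : V → V) : Prop := ∀ v, p v < v ∨ (p v = v ∧ IsMin v)

abbrev RecTreeOn (V : Type*) [Preorder V] : Type _ := {p : V → V // IsRecTree p}

def IsRootInLIS [Preorder V] (p : V → V) : Prop := ∀ v, IsMin v → v ∈ layeredIndepSet p

noncomputable def rootInLISCount (V : Type*) [Preorder V] : ℕ :=
  Nat.card {p : RecTreeOn V // IsRootInLIS p.1}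

namespace IsRecTree

variable [Preorder V] {p : V → V} {v : V}

theorem lt_of_ne (hp : IsRecTree p) (v : V) (hv : p v ≠ v) : p v < v :=
  (hp v).resolve_right fun h => hv h.1

theorem eq_iff_isMin (hp : IsRecTree p) : p v = v ↔ IsMin v :=
  ⟨fun h => ((hp v).resolve_left (h.symm ▸ lt_irrefl v)).2,
    fun h => ((hp v).resolve_left h.not_lt).1⟩

theorem conj_iff [Preorder W] (e : V ≃o W) : IsRecTree (e ∘ p ∘ e.symm) ↔ IsRecTree p := by
  simp only [IsRecTree, ← e.forall_congr_right]
  simp [OrderIso.isMin_apply]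

end IsRecTree

def RecTreeOn.congr [Preorder V] [Preorder W] (e : V ≃o W) : RecTreeOn V ≃ RecTreeOn W :=
  (e.toEquiv.arrowCongr e.toEquiv).subtypeEquiv fun _ => (IsRecTree.conj_iff e).symm

theorem rootInLISCount_le (V : Type*) [Preorder V] [Finite V] :
    rootInLISCount V ≤ Nat.card (RecTreeOn V) :=
  Finite.card_subtype_le _

variable [PartialOrder V]

theorem isRootInLIS_iff_of_isBot {p : V → V} {r : V} (hr : IsBot r) :
    IsRootInLIS p ↔ r ∈ layeredIndepSet p :=
  ⟨fun h => h r hr.isMin, fun h _ hv => by rwa [← hv.eq_of_le (hr _)]⟩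

theorem isMin_subtype_iff {B : Set V} {s v : V} (hs : IsLeast B s) (hv : v ∈ B) :
    IsMin (⟨v, hv⟩ : B) ↔ v = s :=
  ⟨fun hmin =>
    le_antisymm (hmin (show (⟨s, hs.1⟩ : B) ≤ ⟨v, hv⟩ from hs.2 hv)) (hs.2 hv),
    by rintro rfl; exact fun y _ => hs.2 y.2⟩

variable [Finite V] [PartialOrder W] [Finite W]

theorem mem_layeredIndepSet_conj_iff (e : V ≃o W) {p : V → V} (hp : IsRecTree p) (v : V) :
    e v ∈ layeredIndepSet (e ∘ p ∘ e.symm) ↔ v ∈ layeredIndepSet p :=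
  mem_layeredIndepSet_iff_of_children_eq_image ((IsRecTree.conj_iff e).2 hp).lt_of_ne
    hp.lt_of_ne (S := Set.univ) (fun w _ => children_conj e.toEquiv p w)
    (fun _ _ => Set.subset_univ _) trivial

theorem rootInLISCount_congr (e : V ≃o W) : rootInLISCount V = rootInLISCount W :=
  Nat.card_congr <| (RecTreeOn.congr e).subtypeEquiv fun p => by
    change _ ↔ ∀ w, IsMin w → w ∈ layeredIndepSet (e ∘ p.1 ∘ e.symm)
    refine Iff.trans ?_ e.toEquiv.forall_congr_right
    exact forall_congr' fun v =>
      imp_congr e.isMin_apply.symm (mem_layeredIndepSet_conj_iff e p.2 v).symm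

end RecTreeOn

section Fin

theorem Fin.isMin_iff_val_eq_zero {n : ℕ} {i : Fin n} : IsMin i ↔ (i : ℕ) = 0 :=
  ⟨fun h => Nat.le_zero.1 (h (show (⟨0, i.pos⟩ : Fin n) ≤ i from Nat.zero_le _)),
    fun h j _ => by simp [Fin.le_def, h]⟩

theorem isRecTree_iff_isRecParent {n : ℕ} (f : Fin n → Fin n) :
    IsRecTree f ↔ IsRecParent f := by
  refine forall_congr' fun i => ?_
  rw [Fin.isMin_iff_val_eq_zero, Fin.lt_def, Fin.ext_iff]
  omega

def recTreeOnFinEquiv (n : ℕ) : RecTreeOn (Fin n) ≃ RecTree n :=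
  Equiv.subtypeEquivRight isRecTree_iff_isRecParent

theorem card_recTree (n : ℕ) : Fintype.card (RecTree n) = (n - 1)! := by
  let e : RecTree n ≃ ∀ i : Fin n,
      {u : Fin n // ((i : ℕ) = 0 → u = i) ∧ ((i : ℕ) ≠ 0 → (u : ℕ) < i)} :=
    Equiv.subtypePiEquivPi
      (p := fun (i u : Fin n) => ((i : ℕ) = 0 → u = i) ∧ ((i : ℕ) ≠ 0 → (u : ℕ) < i))
  have hfactor (i : Fin n) : Fintype.card {u : Fin n //
      ((i : ℕ) = 0 → u = i) ∧ ((i : ℕ) ≠ 0 → (u : ℕ) < i)} = max (i : ℕ) 1 := by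
    rcases eq_or_ne (i : ℕ) 0 with hi | hi
    · simp [hi]
    · simp only [hi, IsEmpty.forall_iff, ne_eq, not_false_eq_true, forall_const, true_and,
        ← Fin.lt_def, Fintype.card_subtype, Finset.filter_gt_eq_Iio, Fin.card_Iio]
      omega
  rw [Fintype.card_congr e, Fintype.card_pi, Finset.prod_congr rfl fun i _ => hfactor i,
    Fin.prod_univ_eq_prod_range (fun i => max i 1)]
  cases n with
  | zero => rfl
  | succ n => simp [Finset.prod_range_succ', Finset.prod_range_add_one_eq_factorial]

variable {V : Type*} [LinearOrder V] [Fintype V]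

theorem card_recTreeOn : Nat.card (RecTreeOn V) = (Fintype.card V - 1)! := by
  rw [Nat.card_congr ((RecTreeOn.congr (Fintype.orderIsoFinOfCardEq V rfl).symm).trans
    (recTreeOnFinEquiv _)), Nat.card_eq_fintype_card, card_recTree]

theorem rootInLISCount_eq_fin : rootInLISCount V = rootInLISCount (Fin (Fintype.card V)) :=
  (rootInLISCount_congr (Fintype.orderIsoFinOfCardEq V rfl)).symm

theorem rootInLISCount_fin_one : rootInLISCount (Fin 1) = 1 := by
  rw [rootInLISCount, Nat.card_congr (Equiv.subtypeUnivEquiv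
    (p := fun p : RecTreeOn (Fin 1) => IsRootInLIS p.1) fun p v _ =>
    (mem_layeredIndepSet_iff p.2.lt_of_ne).2 fun u hu => absurd (Subsingleton.elim u v) hu.1),
    card_recTreeOn, Fintype.card_fin]
  rfl

theorem rrtRootProb_eq {n : ℕ} (hn : 0 < n) :
    rrtRootProb n = rootInLISCount (Fin n) / (n - 1)! := by
  classical
  have hroot (v : Fin n) : IsMin v ↔ v = ⟨0, hn⟩ := by
    rw [Fin.isMin_iff_val_eq_zero, Fin.ext_iff]
  rw [rrtRootProb, recMeasure, PMF.toMeasure_uniformOfFintype_apply _ (by trivial),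
    ← Nat.card_eq_fintype_card, ENNReal.toReal_div, ENNReal.toReal_natCast,
    ENNReal.toReal_natCast, card_recTree]
  congr 2
  refine Nat.card_congr ((recTreeOnFinEquiv n).symm.subtypeEquiv fun f => ?_)
  simp only [IsRootInLIS, hroot, forall_eq]
  exact ⟨fun ⟨_, h⟩ => h, fun h => ⟨hn, h⟩⟩

end Fin

section Subtree

variable {V : Type*} [Fintype V] {s v : V} {p : V → V}

open Classical in
noncomputable def subtree (p : V → V) (s : V) : Finset V :=
  Finset.univ.filter fun v => ∃ k, p^[k] v = s

theorem mem_subtree : v ∈ subtree p s ↔ ∃ k, p^[k] v = s := by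
  simp [subtree]

theorem self_mem_subtree : s ∈ subtree p s := mem_subtree.2 ⟨0, rfl⟩

theorem apply_mem_subtree (hv : v ∈ subtree p s) (hvs : v ≠ s) : p v ∈ subtree p s := by
  obtain ⟨k, hk⟩ := mem_subtree.1 hv
  cases k with
  | zero => exact absurd hk hvs
  | succ k => exact mem_subtree.2 ⟨k, hk⟩

theorem mem_subtree_of_apply_mem (hv : p v ∈ subtree p s) : v ∈ subtree p s := by
  obtain ⟨k, hk⟩ := mem_subtree.1 hv
  exact mem_subtree.2 ⟨k + 1, hk⟩

end Subtree

section Graft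

variable {V : Type*} [DecidableEq V] {r v : V}

def inducedParent (p : V → V) (B : Finset V) (x : B) : B :=
  if hx : p x ∈ B then ⟨p x, hx⟩ else x

variable [Fintype V] {A : Finset V} {g : A → A} {h : ↥Aᶜ → ↥Aᶜ}

/-- The tree `g` on `A` is hung below `r`, the root of `h`. -/
def graft (r : V) (A : Finset V) (g : A → A) (h : ↥Aᶜ → ↥Aᶜ) (v : V) : V :=
  if hv : v ∈ A then (if g ⟨v, hv⟩ = ⟨v, hv⟩ then r else g ⟨v, hv⟩)
  else h ⟨v, Finset.mem_compl.2 hv⟩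

theorem graft_of_mem (hv : v ∈ A) :
    graft r A g h v = if g ⟨v, hv⟩ = ⟨v, hv⟩ then r else g ⟨v, hv⟩ :=
  dif_pos hv

theorem graft_of_notMem (hv : v ∉ A) : graft r A g h v = h ⟨v, Finset.mem_compl.2 hv⟩ :=
  dif_neg hv

theorem inducedParent_graft_left (hrA : r ∉ A) : inducedParent (graft r A g h) A = g := by
  funext ⟨v, hv⟩
  by_cases hgv : g ⟨v, hv⟩ = ⟨v, hv⟩
  · rw [inducedParent, dif_neg (by simpa [graft_of_mem hv, hgv] using hrA), hgv]
  · simp [inducedParent, graft_of_mem hv, hgv]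

theorem inducedParent_graft_right : inducedParent (graft r A g h) Aᶜ = h := by
  funext ⟨v, hv⟩
  simp [inducedParent, graft_of_notMem (Finset.mem_compl.1 hv)]

theorem children_graft_of_mem (hrA : r ∉ A) (hv : v ∈ A) :
    children (graft r A g h) v = Subtype.val '' children g ⟨v, hv⟩ := by
  ext u
  constructor
  · rintro ⟨huv, hFu⟩
    by_cases hu : u ∈ A
    · rw [graft_of_mem hu] at hFu
      split_ifs at hFu with hgu
      · exact absurd (hFu ▸ hv) hrA
      · exact ⟨⟨u, hu⟩, ⟨fun h => huv (congrArg Subtype.val h), Subtype.ext hFu⟩, rfl⟩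
    · rw [graft_of_notMem hu] at hFu
      exact absurd hv (Finset.mem_compl.1 (hFu ▸ (h _).2))
  · rintro ⟨⟨u, hu⟩, ⟨huv, hgu⟩, rfl⟩
    refine ⟨fun h => huv (Subtype.ext h), ?_⟩
    rw [graft_of_mem hu, if_neg (hgu ▸ Ne.symm huv), hgu]

theorem children_graft_of_notMem (hv : v ∉ A) (hvr : v ≠ r) :
    children (graft r A g h) v = Subtype.val '' children h ⟨v, Finset.mem_compl.2 hv⟩ := by
  ext u
  constructor
  · rintro ⟨huv, hFu⟩
    by_cases hu : u ∈ A
    · rw [graft_of_mem hu] at hFu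
      split_ifs at hFu
      · exact absurd hFu.symm hvr
      · exact absurd (hFu ▸ (g _).2) hv
    · rw [graft_of_notMem hu] at hFu
      exact ⟨⟨u, Finset.mem_compl.2 hu⟩,
        ⟨fun h => huv (congrArg Subtype.val h), Subtype.ext hFu⟩, rfl⟩
  · rintro ⟨⟨u, hu⟩, ⟨huv, hhu⟩, rfl⟩
    refine ⟨fun h => huv (Subtype.ext h), ?_⟩
    rw [graft_of_notMem (Finset.mem_compl.1 hu), hhu]

end Graft

section CutAtSecondVertex

variable {V : Type*} [LinearOrder V] {r s v : V} {p : V → V}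

theorem IsRecTree.apply_eq_of_covBy (hp : IsRecTree p) (hr : IsBot r) (hrs : r ⋖ s) :
    p s = r := by
  have hps : p s < s := hp.lt_of_ne s fun h => not_isMin_of_lt hrs.lt (hp.eq_iff_isMin.1 h)
  exact le_antisymm (not_lt.1 fun hrp => (hrs.ge_of_gt hrp).not_gt hps) (hr _)

theorem isLeast_of_covBy (hr : IsBot r) (hrs : r ⋖ s) {A : Set V} (hsA : s ∈ A)
    (hrA : r ∉ A) : IsLeast A s :=
  ⟨hsA, fun v hv => hrs.ge_of_gt ((hr v).lt_of_ne fun h => hrA (h ▸ hv))⟩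

theorem isRecTree_inducedParent (hp : IsRecTree p) {B : Finset V}
    (hB : ∀ v ∈ B, p v ∉ B → ∀ w ∈ B, v ≤ w) : IsRecTree (inducedParent p B) := by
  rintro ⟨v, hv⟩
  by_cases hpv : p v ∈ B
  · rw [inducedParent, dif_pos hpv]
    exact (hp v).imp id fun ⟨heq, hmin⟩ => ⟨Subtype.ext heq, fun _ hy => hmin hy⟩
  · rw [inducedParent, dif_neg hpv]
    exact Or.inr ⟨rfl, fun y _ => hB v hv hpv y y.2⟩

variable [Fintype V] {A : Finset V} {g : A → A} {h : ↥Aᶜ → ↥Aᶜ}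

theorem isRecTree_graft (hr : IsBot r) (hrA : r ∉ A) (hg : IsRecTree g) (hh : IsRecTree h) :
    IsRecTree (graft r A g h) := by
  intro v
  by_cases hv : v ∈ A
  · left
    rw [graft_of_mem hv]
    split_ifs with hgv
    · exact (hr v).lt_of_ne (by rintro rfl; exact hrA hv)
    · exact hg.lt_of_ne _ hgv
  · rw [graft_of_notMem hv]
    rcases hh ⟨v, Finset.mem_compl.2 hv⟩ with hlt | ⟨heq, hmin⟩
    · exact Or.inl hlt
    · have hvr : v = r :=
        le_antisymm (hmin (show (⟨r, Finset.mem_compl.2 hrA⟩ : ↥Aᶜ) ≤ _ from hr v)) (hr v)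
      exact Or.inr ⟨congrArg Subtype.val heq, hvr ▸ hr.isMin⟩

theorem children_graft_bot (hrA : r ∉ A) (hs : IsLeast (A : Set V) s) (hg : IsRecTree g) :
    children (graft r A g h) r =
      insert s (Subtype.val '' children h ⟨r, Finset.mem_compl.2 hrA⟩) := by
  have hgs : g ⟨s, hs.1⟩ = ⟨s, hs.1⟩ :=
    hg.eq_iff_isMin.2 ((isMin_subtype_iff hs hs.1).2 rfl)
  ext u
  constructor
  · rintro ⟨hur, hFu⟩
    by_cases hu : u ∈ A
    · rw [graft_of_mem hu] at hFu
      split_ifs at hFu with hgu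
      · exact Or.inl ((isMin_subtype_iff hs hu).1 (hg.eq_iff_isMin.1 hgu))
      · exact absurd (hFu ▸ (g _).2) hrA
    · rw [graft_of_notMem hu] at hFu
      exact Or.inr ⟨⟨u, Finset.mem_compl.2 hu⟩,
        ⟨fun h => hur (congrArg Subtype.val h), Subtype.ext hFu⟩, rfl⟩
  · rintro (rfl | ⟨⟨u, hu⟩, ⟨hur, hhu⟩, rfl⟩)
    · exact ⟨fun h => hrA (h ▸ hs.1), by rw [graft_of_mem hs.1, if_pos hgs]⟩
    · refine ⟨fun h => hur (Subtype.ext h), ?_⟩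
      rw [graft_of_notMem (Finset.mem_compl.1 hu), hhu]

theorem bot_mem_layeredIndepSet_graft_iff (hr : IsBot r) (hrA : r ∉ A)
    (hs : IsLeast (A : Set V) s) (hg : IsRecTree g) (hh : IsRecTree h) :
    r ∈ layeredIndepSet (graft r A g h) ↔
      ⟨s, hs.1⟩ ∉ layeredIndepSet g ∧
        ⟨r, Finset.mem_compl.2 hrA⟩ ∈ layeredIndepSet h := by
  have hF := (isRecTree_graft hr hrA hg hh).lt_of_ne
  have hA (w : A) : (w : V) ∈ layeredIndepSet (graft r A g h) ↔ w ∈ layeredIndepSet g :=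
    mem_layeredIndepSet_iff_of_children_eq_image hF hg.lt_of_ne (S := Set.univ)
      (fun w _ => children_graft_of_mem hrA w.2) (fun _ _ => Set.subset_univ _) trivial
  have hAc (w : ↥Aᶜ) (hw : ¬IsMin w) :
      (w : V) ∈ layeredIndepSet (graft r A g h) ↔ w ∈ layeredIndepSet h := by
    refine mem_layeredIndepSet_iff_of_children_eq_image hF hh.lt_of_ne
      (S := {w | ¬IsMin w}) (fun w hw => ?_)
      (fun w _ u hu => not_isMin_of_lt (lt_of_mem_children hh.lt_of_ne hu)) hw
    refine children_graft_of_notMem (Finset.mem_compl.1 w.2) fun hwr => hw ?_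
    exact fun y _ => show (w : V) ≤ y from hwr ▸ hr y
  rw [mem_layeredIndepSet_iff hF, children_graft_bot hrA hs hg, Set.forall_mem_insert,
    Set.forall_mem_image, mem_layeredIndepSet_iff hh.lt_of_ne, hA ⟨s, hs.1⟩]
  exact and_congr_right fun _ => forall₂_congr fun u hu =>
    not_congr (hAc u (not_isMin_of_lt (lt_of_mem_children hh.lt_of_ne hu)))

theorem subtree_graft (hs : IsLeast (A : Set V) s) (hg : IsRecTree g) :
    subtree (graft r A g h) s = A := by
  ext v
  constructor
  · rw [mem_subtree]
    rintro ⟨k, hk⟩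
    induction k generalizing v with
    | zero => exact (show v = s from hk) ▸ hs.1
    | succ k ih =>
      by_contra hvA
      have hFv := ih (v := graft r A g h v) hk
      rw [graft_of_notMem hvA] at hFv
      exact Finset.mem_compl.1 (h _).2 hFv
  · intro hv
    induction v using WellFoundedLT.induction with
    | _ v ih =>
      by_cases hvs : v = s
      · exact hvs ▸ self_mem_subtree
      · have hgv : g ⟨v, hv⟩ ≠ ⟨v, hv⟩ := fun hgv =>
          hvs ((isMin_subtype_iff hs hv).1 (hg.eq_iff_isMin.1 hgv))
        have hFv : graft r A g h v = g ⟨v, hv⟩ := by rw [graft_of_mem hv, if_neg hgv]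
        refine mem_subtree_of_apply_mem ?_
        rw [hFv]
        exact ih _ (hg.lt_of_ne _ hgv) (g _).2

theorem bot_notMem_subtree (hp : IsRecTree p) (hr : IsBot r) (hrs : r ⋖ s) :
    r ∉ subtree p s := by
  rw [mem_subtree]
  rintro ⟨k, hk⟩
  rw [Function.iterate_fixed (hp.eq_iff_isMin.2 hr.isMin)] at hk
  exact hrs.lt.ne hk

theorem graft_subtree (hp : IsRecTree p) (hr : IsBot r) (hrs : r ⋖ s) :
    graft r (subtree p s) (inducedParent p _) (inducedParent p (subtree p s)ᶜ) = p := by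
  have hrA := bot_notMem_subtree hp hr hrs
  funext v
  by_cases hv : v ∈ subtree p s
  · rw [graft_of_mem hv]
    by_cases hvs : v = s
    · subst hvs
      have hpv : p v ∉ subtree p v := hp.apply_eq_of_covBy hr hrs ▸ hrA
      have hroot : inducedParent p (subtree p v) ⟨v, hv⟩ = ⟨v, hv⟩ := dif_neg hpv
      rw [if_pos hroot, hp.apply_eq_of_covBy hr hrs]
    · have hpv := apply_mem_subtree hv hvs
      have hne : p v ≠ v := fun h => hrA ((hp.eq_iff_isMin.1 h).eq_of_le (hr v) ▸ hv)
      rw [if_neg (by simpa [inducedParent, hpv] using hne)]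
      simp [inducedParent, hpv]
  · have hpv : p v ∈ (subtree p s)ᶜ :=
      Finset.mem_compl.2 fun h => hv (mem_subtree_of_apply_mem h)
    simp [graft_of_notMem hv, inducedParent, hpv]

variable (r s) in
abbrev GraftData : Type _ :=
  Σ A : {A : Finset V // s ∈ A ∧ r ∉ A}, RecTreeOn A.1 × RecTreeOn ↥A.1ᶜ

def graftMap (hr : IsBot r) (x : GraftData r s) : RecTreeOn V :=
  ⟨graft r x.1.1 x.2.1.1 x.2.2.1, isRecTree_graft hr x.1.2.2 x.2.1.2 x.2.2.2⟩

theorem graftMap_bijective (hr : IsBot r) (hrs : r ⋖ s) :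
    Function.Bijective (graftMap (s := s) hr) := by
  refine ⟨?_, fun p => ?_⟩
  · rintro ⟨A, g, h⟩ ⟨A', g', h'⟩ hF
    replace hF : graft r A.1 g.1 h.1 = graft r A'.1 g'.1 h'.1 := congrArg Subtype.val hF
    obtain rfl : A = A' := Subtype.ext <|
      (subtree_graft (isLeast_of_covBy hr hrs A.2.1 A.2.2) g.2).symm.trans <|
        (congrArg (subtree · s) hF).trans
          (subtree_graft (isLeast_of_covBy hr hrs A'.2.1 A'.2.2) g'.2)
    obtain rfl : g = g' := Subtype.ext <| (inducedParent_graft_left A.2.2).symm.trans <|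
      (congrArg (inducedParent · A.1) hF).trans (inducedParent_graft_left A.2.2)
    obtain rfl : h = h' := Subtype.ext <| inducedParent_graft_right.symm.trans <|
      (congrArg (inducedParent · A.1ᶜ) hF).trans inducedParent_graft_right
    rfl
  · have hrA := bot_notMem_subtree p.2 hr hrs
    refine ⟨⟨⟨subtree p.1 s, self_mem_subtree, hrA⟩,
      ⟨inducedParent p.1 _, isRecTree_inducedParent p.2 fun v hv hpv => ?_⟩,
      ⟨inducedParent p.1 _, isRecTree_inducedParent p.2 fun v hv hpv => ?_⟩⟩,
      Subtype.ext (graft_subtree p.2 hr hrs)⟩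
    · obtain rfl : v = s := by_contra fun hvs => hpv (apply_mem_subtree hv hvs)
      exact (isLeast_of_covBy hr hrs self_mem_subtree hrA).2
    · exact absurd (mem_subtree_of_apply_mem (not_not.1 (Finset.mem_compl.not.1 hpv)))
        (Finset.mem_compl.1 hv)

theorem isRootInLIS_graftMap (hr : IsBot r) (hrs : r ⋖ s) (x : GraftData r s) :
    IsRootInLIS (graftMap hr x).1 ↔ ¬IsRootInLIS x.2.1.1 ∧ IsRootInLIS x.2.2.1 := by
  obtain ⟨A, g, h⟩ := x
  have hs := isLeast_of_covBy hr hrs A.2.1 A.2.2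
  rw [isRootInLIS_iff_of_isBot hr,
    isRootInLIS_iff_of_isBot (r := (⟨s, A.2.1⟩ : A.1)) fun y => hs.2 y.2,
    isRootInLIS_iff_of_isBot (r := (⟨r, Finset.mem_compl.2 A.2.2⟩ : ↥A.1ᶜ)) fun y => hr y]
  exact bot_mem_layeredIndepSet_graft_iff hr A.2.2 hs g.2 h.2

end CutAtSecondVertex

section Count

variable {V : Type*} [LinearOrder V] [Fintype V] {r s : V}

theorem card_subtype_not_eq_sub {T : Type*} [Finite T] (P : T → Prop) :
    Nat.card {t // ¬P t} = Nat.card T - Nat.card {t // P t} := by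
  classical
  have := Fintype.ofFinite T
  simp only [Nat.card_eq_fintype_card, Fintype.card_subtype_compl]

theorem rootInLISCount_eq_sum (hr : IsBot r) (hrs : r ⋖ s) :
    rootInLISCount V = ∑ A ∈ Finset.univ.filter (fun A : Finset V => s ∈ A ∧ r ∉ A),
      (Nat.card (RecTreeOn A) - rootInLISCount A) * rootInLISCount ↥Aᶜ := by
  let graftEquiv : {x : GraftData r s // ¬IsRootInLIS x.2.1.1 ∧ IsRootInLIS x.2.2.1} ≃
      {p : RecTreeOn V // IsRootInLIS p.1} :=
    (Equiv.ofBijective _ (graftMap_bijective hr hrs)).subtypeEquiv fun x =>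
      (isRootInLIS_graftMap hr hrs x).symm
  let sigmaEquiv : {x : GraftData r s // ¬IsRootInLIS x.2.1.1 ∧ IsRootInLIS x.2.2.1} ≃
      Σ A : {A : Finset V // s ∈ A ∧ r ∉ A},
        {g : RecTreeOn A.1 // ¬IsRootInLIS g.1} × {h : RecTreeOn ↥A.1ᶜ // IsRootInLIS h.1} :=
    { toFun := fun x => ⟨x.1.1, ⟨x.1.2.1, x.2.1⟩, ⟨x.1.2.2, x.2.2⟩⟩
      invFun := fun y => ⟨⟨y.1, y.2.1.1, y.2.2.1⟩, y.2.1.2, y.2.2.2⟩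
      left_inv := fun _ => rfl
      right_inv := fun _ => rfl }
  rw [rootInLISCount, ← Nat.card_congr graftEquiv, Nat.card_congr sigmaEquiv, Nat.card_sigma,
    Finset.sum_subtype _ (p := fun A : Finset V => s ∈ A ∧ r ∉ A) fun A => by simp]
  refine Fintype.sum_congr _ _ fun A => ?_
  rw [Nat.card_prod, card_subtype_not_eq_sub]
  rfl

theorem sum_filter_mem_notMem_eq_sum_range {M : Type*} [AddCommMonoid M] (hrs : r ≠ s)
    (f : ℕ → M) :
    ∑ A ∈ Finset.univ.filter (fun A : Finset V => s ∈ A ∧ r ∉ A), f A.card =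
      ∑ m ∈ Finset.range (Fintype.card V - 2 + 1),
        (Fintype.card V - 2).choose m • f (m + 1) := by
  have hcard : ((Finset.univ.erase r).erase s).card = Fintype.card V - 2 := by
    rw [Finset.card_erase_of_mem (Finset.mem_erase.2 ⟨hrs.symm, Finset.mem_univ _⟩),
      Finset.card_erase_of_mem (Finset.mem_univ _), Finset.card_univ]
    omega
  rw [← hcard, ← Finset.sum_powerset_apply_card (fun m => f (m + 1))]
  refine Finset.sum_nbij' (·.erase s) (insert s) ?_ ?_ ?_ ?_ ?_
  · intro A hA
    simp only [Finset.mem_filter, Finset.mem_univ, true_and] at hA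
    refine Finset.mem_powerset.2 fun v hv => ?_
    simp only [Finset.mem_erase] at hv ⊢
    exact ⟨hv.1, fun h => hA.2 (h ▸ hv.2), Finset.mem_univ _⟩
  · intro B hB
    simp only [Finset.mem_filter, Finset.mem_univ, true_and, Finset.mem_insert_self,
      Finset.mem_insert, not_or]
    exact ⟨hrs, fun h =>
      (Finset.mem_erase.1 (Finset.mem_erase.1 (Finset.mem_powerset.1 hB h)).2).1 rfl⟩
  · intro A hA
    exact Finset.insert_erase (Finset.mem_filter.1 hA).2.1
  · intro B hB
    exact Finset.erase_insert fun h => (Finset.mem_erase.1 (Finset.mem_powerset.1 hB h)).1 rfl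
  · intro A hA
    rw [Finset.card_erase_add_one (Finset.mem_filter.1 hA).2.1]

end Count

theorem rootInLISCount_fin_add_two (k : ℕ) :
    rootInLISCount (Fin (k + 2)) = ∑ m ∈ Finset.range (k + 1), k.choose m *
      (((m)! - rootInLISCount (Fin (m + 1))) * rootInLISCount (Fin (k + 1 - m))) := by
  let f (j : ℕ) : ℕ := ((j - 1)! - rootInLISCount (Fin j)) * rootInLISCount (Fin (k + 2 - j))
  have hterm (A : Finset (Fin (k + 2))) :
      (Nat.card (RecTreeOn A) - rootInLISCount A) * rootInLISCount ↥Aᶜ = f A.card := by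
    rw [card_recTreeOn, rootInLISCount_eq_fin, rootInLISCount_eq_fin (V := ↥Aᶜ),
      Fintype.card_coe, Fintype.card_coe, Finset.card_compl, Fintype.card_fin]
  rw [rootInLISCount_eq_sum (r := 0) (s := 1) IsBotZeroClass.isBot_zero
      (by simp [Fin.covBy_iff]), Finset.sum_congr rfl fun A _ => hterm A,
    sum_filter_mem_notMem_eq_sum_range (by simp) f]
  refine Finset.sum_congr (by simp) fun m _ => ?_
  simp only [f, Fintype.card_fin, smul_eq_mul, Nat.add_sub_cancel]
  rw [show k + 2 - (m + 1) = k + 1 - m by omega]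

theorem rrtRootProb_add_two (k : ℕ) :
    rrtRootProb (k + 2) = 1 / (k + 1 : ℝ) *
      ∑ m ∈ Finset.range (k + 1), (1 - rrtRootProb (m + 1)) * rrtRootProb (k + 1 - m) := by
  have hterm (m : ℕ) (hm : m ∈ Finset.range (k + 1)) :
      ((k.choose m * (((m)! - rootInLISCount (Fin (m + 1))) *
        rootInLISCount (Fin (k + 1 - m))) : ℕ) : ℝ) =
        k ! * ((1 - rrtRootProb (m + 1)) * rrtRootProb (k + 1 - m)) := by
    have hmk : m ≤ k := Nat.lt_succ_iff.1 (Finset.mem_range.1 hm)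
    have hle : rootInLISCount (Fin (m + 1)) ≤ m ! := by
      simpa [card_recTreeOn] using rootInLISCount_le (Fin (m + 1))
    rw [rrtRootProb_eq (by omega : 0 < m + 1), rrtRootProb_eq (by omega : 0 < k + 1 - m),
      show k + 1 - m - 1 = k - m by omega,
      Nat.add_sub_cancel, ← Nat.choose_mul_factorial_mul_factorial hmk]
    push_cast [Nat.cast_sub hle]
    field_simp
  rw [rrtRootProb_eq (by omega), rootInLISCount_fin_add_two, Nat.cast_sum,
    Finset.sum_congr rfl hterm, ← Finset.mul_sum, show k + 2 - 1 = k + 1 from rfl,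
    Nat.factorial_succ]
  push_cast
  field_simp

/-- The probabilities `p̂ₙ` that the root of a random recursive tree belongs to the layered
independent set satisfy `p̂₁ = 1` and, for `n ≥ 2`,
`p̂ₙ = (1/(n-1)) Σ_{j=1}^{n-1} (1 - p̂ⱼ) p̂_{n-j}`. -/
theorem rrtRootProb_recurrence :
    rrtRootProb 1 = 1 ∧
      ∀ n : ℕ, 2 ≤ n →
        rrtRootProb n =
          (1 / ((n : ℝ) - 1)) *
            ∑ j ∈ Finset.Icc 1 (n - 1), (1 - rrtRootProb j) * rrtRootProb (n - j) := by
  refine ⟨?_, fun n hn => ?_⟩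
  · rw [rrtRootProb_eq one_pos, rootInLISCount_fin_one]
    norm_num
  · obtain ⟨k, rfl⟩ := Nat.exists_eq_add_of_le' hn
    rw [rrtRootProb_add_two, show k + 2 - 1 = k + 1 from rfl,
      ← Finset.Ico_add_one_right_eq_Icc, Finset.sum_Ico_eq_sum_range]
    push_cast
    congr 1
    · ring
    · refine Finset.sum_congr (by simp) fun j _ => ?_
      rw [add_comm 1 j]
      congr 2
      omega
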